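/- Freeness criterion: let S be a left shelf generated by an element g, and assume S is acyclic. Then for all terms T, T' in FreeMagma Unit, T ≡LD T' holds if and only if the evaluations T(g) and T'(g) in S are equal; in other words, S is a free left shelf on the generator g. -/
import Mathlib

/-- LD-equivalence: the smallest congruence on `FreeMagma X` containing all pairs
`(T₁ ◃ (T₂ ◃ T₃), (T₁ ◃ T₂) ◃ (T₁ ◃ T₃))`. -/
inductive LDEquiv {X : Type*} : FreeMagma X → FreeMagma X → Prop
  | ld (a b c : FreeMagma X) : LDEquiv (a * (b * c)) ((a * b) * (a * c))
  | refl (a : FreeMagma X) : LDEquiv a a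
  | symm {a b : FreeMagma X} : LDEquiv a b → LDEquiv b a
  | trans {a b c : FreeMagma X} : LDEquiv a b → LDEquiv b c → LDEquiv a c
  | mul_left {a b : FreeMagma X} (c : FreeMagma X) : LDEquiv a b → LDEquiv (c * a) (c * b)
  | mul_right {a b : FreeMagma X} (c : FreeMagma X) : LDEquiv a b → LDEquiv (a * c) (b * c)

/-- Evaluation of a one-variable term in a left shelf at `g`: the unique magma
morphism `FreeMagma Unit → S` sending the generator to `g`. -/
def evalShelf {S : Type*} [Shelf S] (g : S) : FreeMagma Unit → S
  | .of _ => g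
  | .mul t₁ t₂ => Shelf.act (evalShelf g t₁) (evalShelf g t₂)

namespace LDAux

variable {X : Type*}

/-- One-step LD-expansion. -/
inductive Exp : FreeMagma X → FreeMagma X → Prop
  | ld (a b c : FreeMagma X) : Exp (a * (b * c)) ((a * b) * (a * c))
  | left {a a' : FreeMagma X} (b : FreeMagma X) : Exp a a' → Exp (a * b) (a' * b)
  | right {b b' : FreeMagma X} (a : FreeMagma X) : Exp b b' → Exp (a * b) (a * b')

abbrev Exps : FreeMagma X → FreeMagma X → Prop := Relation.ReflTransGen Exp

theorem exps_mul {a a' b b' : FreeMagma X} (ha : Exps a a') (hb : Exps b b') :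
    Exps (a * b) (a' * b') := by
  have h1 : Exps (a * b) (a' * b) := by
    induction ha with
    | refl => exact Relation.ReflTransGen.refl
    | tail _ h ih => exact ih.tail (Exp.left _ h)
  have h2 : Exps (a' * b) (a' * b') := by
    induction hb with
    | refl => exact Relation.ReflTransGen.refl
    | tail _ h ih => exact ih.tail (Exp.right _ h)
  exact h1.trans h2

/-- Dehornoy's action: `act a b` is the full left-distribution of `a` over `b`. -/
def act : FreeMagma X → FreeMagma X → FreeMagma X
  | a, .of x => a * .of x
  | a, .mul b c => act a b * act a c

@[simp] theorem act_of (a : FreeMagma X) (x : X) : act a (.of x) = a * .of x := rfl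
@[simp] theorem act_mul (a b c : FreeMagma X) : act a (b * c) = act a b * act a c := rfl

theorem exps_act (a b : FreeMagma X) : Exps (a * b) (act a b) := by
  induction b generalizing a with
  | ih1 x => exact Relation.ReflTransGen.refl
  | ih2 b c ihb ihc =>
    exact (Relation.ReflTransGen.single (Exp.ld a b c)).trans (exps_mul (ihb a) (ihc a))

theorem act_monoL_one {a a' : FreeMagma X} (b : FreeMagma X) (h : Exp a a') :
    Exps (act a b) (act a' b) := by
  induction b with
  | ih1 x => exact Relation.ReflTransGen.single (Exp.left _ h)
  | ih2 b c ihb ihc => exact exps_mul ihb ihc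

theorem act_monoL {a a' : FreeMagma X} (b : FreeMagma X) (h : Exps a a') :
    Exps (act a b) (act a' b) := by
  induction h with
  | refl => exact Relation.ReflTransGen.refl
  | tail _ h ih => exact ih.trans (act_monoL_one _ h)

theorem act_monoR_one {b b' : FreeMagma X} (a : FreeMagma X) (h : Exp b b') :
    Exps (act a b) (act a b') := by
  induction h generalizing a with
  | ld p q r => exact Relation.ReflTransGen.single (Exp.ld _ _ _)
  | left b h ih => exact exps_mul (ih a) Relation.ReflTransGen.refl
  | right c h ih => exact exps_mul Relation.ReflTransGen.refl (ih a)

theorem act_monoR {b b' : FreeMagma X} (a : FreeMagma X) (h : Exps b b') :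
    Exps (act a b) (act a b') := by
  induction h with
  | refl => exact Relation.ReflTransGen.refl
  | tail _ h ih => exact ih.trans (act_monoR_one _ h)

/-- `(a▹b) * (a▹c) →* a▹(b▹c)`. -/
theorem exps_mulact (a b c : FreeMagma X) :
    Exps (act a b * act a c) (act a (act b c)) := by
  induction c with
  | ih1 x => exact Relation.ReflTransGen.refl
  | ih2 c d ihc ihd =>
    exact (Relation.ReflTransGen.single (Exp.ld _ _ _)).trans (exps_mul ihc ihd)

/-- `a▹(b▹c) →* (a▹b)▹(a▹c)`. -/
theorem exps_act_act (a b c : FreeMagma X) :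
    Exps (act a (act b c)) (act (act a b) (act a c)) := by
  induction c with
  | ih1 x =>
    exact (Relation.ReflTransGen.single (Exp.ld _ _ _)).trans
      (exps_mul (exps_act _ _) Relation.ReflTransGen.refl)
  | ih2 c d ihc ihd => exact exps_mul ihc ihd

/-- Dehornoy's ∂ operator. -/
def der : FreeMagma X → FreeMagma X
  | .of x => .of x
  | .mul a b => act (der a) (der b)

theorem exps_der (T : FreeMagma X) : Exps T (der T) := by
  induction T with
  | ih1 x => exact Relation.ReflTransGen.refl
  | ih2 a b iha ihb => exact (exps_mul iha ihb).trans (exps_act _ _)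

theorem exp_der {T S : FreeMagma X} (h : Exp T S) : Exps S (der T) := by
  induction h with
  | ld a b c =>
    have h1 : Exps ((a * b) * (a * c)) (act (der a) (der b) * act (der a) (der c)) :=
      exps_mul ((exps_mul (exps_der a) (exps_der b)).trans (exps_act _ _))
        ((exps_mul (exps_der a) (exps_der c)).trans (exps_act _ _))
    exact h1.trans (exps_mulact _ _ _)
  | left b h ih => exact (exps_mul ih (exps_der b)).trans (exps_act _ _)
  | right a h ih => exact (exps_mul (exps_der a) ih).trans (exps_act _ _)

theorem der_mono_one {T S : FreeMagma X} (h : Exp T S) : Exps (der T) (der S) := by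
  induction h with
  | ld a b c => exact exps_act_act _ _ _
  | left b h ih => exact act_monoL _ ih
  | right a h ih => exact act_monoR _ ih

theorem der_mono {T S : FreeMagma X} (h : Exps T S) : Exps (der T) (der S) := by
  induction h with
  | refl => exact Relation.ReflTransGen.refl
  | tail _ h ih => exact ih.trans (der_mono_one h)

def derN : ℕ → FreeMagma X → FreeMagma X
  | 0, T => T
  | n + 1, T => derN n (der T)

theorem exps_derN (n : ℕ) (T : FreeMagma X) : Exps T (derN n T) := by
  induction n generalizing T with
  | zero => exact Relation.ReflTransGen.refl
  | succ n ih => exact (exps_der T).trans (ih (der T))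

theorem derN_mono (n : ℕ) {T S : FreeMagma X} (h : Exps T S) :
    Exps (derN n T) (derN n S) := by
  induction n generalizing T S with
  | zero => exact h
  | succ n ih => exact ih (der_mono h)

theorem exps_to_derN {T S : FreeMagma X} (h : Exps T S) : ∃ n, Exps S (derN n T) := by
  induction h using Relation.ReflTransGen.head_induction_on with
  | refl => exact ⟨0, Relation.ReflTransGen.refl⟩
  | head h _ ih =>
    obtain ⟨n, hn⟩ := ih
    exact ⟨n + 1, hn.trans (derN_mono n (exp_der h))⟩

/-- Confluence of LD-expansion. -/
theorem confluence {T U V : FreeMagma X} (hU : Exps T U) (hV : Exps T V) :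
    ∃ W, Exps U W ∧ Exps V W := by
  obtain ⟨n, hn⟩ := exps_to_derN hU
  exact ⟨derN n V, hn.trans (derN_mono n hV), exps_derN n V⟩

theorem exp_ldequiv {a b : FreeMagma X} (h : Exp a b) : LDEquiv a b := by
  induction h with
  | ld a b c => exact LDEquiv.ld a b c
  | left b _ ih => exact LDEquiv.mul_right b ih
  | right a _ ih => exact LDEquiv.mul_left a ih

theorem exps_ldequiv {a b : FreeMagma X} (h : Exps a b) : LDEquiv a b := by
  induction h with
  | refl => exact LDEquiv.refl _
  | tail _ h ih => exact ih.trans (exp_ldequiv h)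

/-- Church–Rosser: LD-equivalent terms have a common expansion. -/
theorem ldequiv_join {a b : FreeMagma X} (h : LDEquiv a b) :
    ∃ w, Exps a w ∧ Exps b w := by
  induction h with
  | ld a b c =>
    exact ⟨(a * b) * (a * c), Relation.ReflTransGen.single (Exp.ld a b c),
      Relation.ReflTransGen.refl⟩
  | refl a => exact ⟨a, Relation.ReflTransGen.refl, Relation.ReflTransGen.refl⟩
  | symm _ ih => obtain ⟨w, h1, h2⟩ := ih; exact ⟨w, h2, h1⟩
  | trans _ _ ih1 ih2 =>
    obtain ⟨w1, ha, hb1⟩ := ih1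
    obtain ⟨w2, hb2, hc⟩ := ih2
    obtain ⟨w, hw1, hw2⟩ := confluence hb1 hb2
    exact ⟨w, ha.trans hw1, hc.trans hw2⟩
  | mul_left c _ ih =>
    obtain ⟨w, h1, h2⟩ := ih
    exact ⟨c * w, exps_mul Relation.ReflTransGen.refl h1,
      exps_mul Relation.ReflTransGen.refl h2⟩
  | mul_right c _ ih =>
    obtain ⟨w, h1, h2⟩ := ih
    exact ⟨w * c, exps_mul h1 Relation.ReflTransGen.refl,
      exps_mul h2 Relation.ReflTransGen.refl⟩

/-! ### Iterated left subterms (the left spine) -/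

inductive LeftSub : FreeMagma X → FreeMagma X → Prop
  | refl (a : FreeMagma X) : LeftSub a a
  | tail {a b : FreeMagma X} (c : FreeMagma X) : LeftSub a b → LeftSub a (b * c)

theorem leftSub_inv {r b c : FreeMagma X} (h : LeftSub r (b * c)) :
    r = b * c ∨ LeftSub r b := by
  cases h with
  | refl => exact Or.inl rfl
  | tail _ h => exact Or.inr h

/-- The left spine is linearly ordered. -/
theorem leftSub_linear {a b c : FreeMagma X} (ha : LeftSub a c) (hb : LeftSub b c) :
    LeftSub a b ∨ LeftSub b a := by
  induction ha with
  | refl => exact Or.inr hb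
  | tail d h ih =>
    rcases leftSub_inv hb with rfl | hb'
    · exact Or.inl (LeftSub.tail _ h)
    · exact ih hb'

/-- Spine lemma, one step: a one-step expansion maps spine elements to
expansions of spine elements. -/
theorem spine_one {V W R : FreeMagma X} (h : Exp V W) (hR : LeftSub R V) :
    ∃ R', LeftSub R' W ∧ Exps R R' := by
  induction h generalizing R with
  | ld a b c =>
    rcases leftSub_inv hR with rfl | hR'
    · exact ⟨(a * b) * (a * c), LeftSub.refl _, Relation.ReflTransGen.single (Exp.ld a b c)⟩
    · exact ⟨R, LeftSub.tail _ (LeftSub.tail _ hR'), Relation.ReflTransGen.refl⟩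
  | @left a a' b h ih =>
    rcases leftSub_inv hR with rfl | hR'
    · exact ⟨a' * b, LeftSub.refl _, Relation.ReflTransGen.single (Exp.left b h)⟩
    · obtain ⟨R', h1, h2⟩ := ih hR'
      exact ⟨R', LeftSub.tail _ h1, h2⟩
  | @right b b' a h ih =>
    rcases leftSub_inv hR with rfl | hR'
    · exact ⟨a * b', LeftSub.refl _, Relation.ReflTransGen.single (Exp.right a h)⟩
    · exact ⟨R, LeftSub.tail _ hR', Relation.ReflTransGen.refl⟩

theorem spine_star {V W R : FreeMagma X} (h : Exps V W) (hR : LeftSub R V) :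
    ∃ R', LeftSub R' W ∧ Exps R R' := by
  induction h with
  | refl => exact ⟨R, hR, Relation.ReflTransGen.refl⟩
  | tail _ h ih =>
    obtain ⟨R', h1, h2⟩ := ih
    obtain ⟨R'', h1', h2'⟩ := spine_one h h1
    exact ⟨R'', h1', h2.trans h2'⟩

/-! ### Division -/

/-- Left division up to LD-equivalence. -/
def Div (a b : FreeMagma X) : Prop := ∃ u, LDEquiv (a * u) b

abbrev DivT : FreeMagma X → FreeMagma X → Prop := Relation.TransGen Div

theorem div_congr {a a' b b' : FreeMagma X} (ea : LDEquiv a a') (eb : LDEquiv b b')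
    (h : Div a b) : Div a' b' := by
  obtain ⟨u, hu⟩ := h
  exact ⟨u, ((LDEquiv.mul_right u ea.symm).trans hu).trans eb⟩

theorem divT_congr_left {a a' b : FreeMagma X} (ea : LDEquiv a a') (h : DivT a b) :
    DivT a' b := by
  induction h with
  | single h => exact Relation.TransGen.single (div_congr ea (LDEquiv.refl _) h)
  | tail _ h ih => exact ih.tail h

theorem divT_congr {a a' b b' : FreeMagma X} (ea : LDEquiv a a') (eb : LDEquiv b b')
    (h : DivT a b) : DivT a' b' := by
  have h' := divT_congr_left ea h
  cases h' with
  | single h => exact Relation.TransGen.single (div_congr (LDEquiv.refl _) eb h)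
  | tail hT h => exact hT.tail (div_congr (LDEquiv.refl _) eb h)

theorem leftSub_divT {a b : FreeMagma X} (h : LeftSub a b) : a = b ∨ DivT a b := by
  induction h with
  | refl => exact Or.inl rfl
  | tail c h ih =>
    rcases ih with rfl | ih
    · exact Or.inr (Relation.TransGen.single ⟨c, LDEquiv.refl _⟩)
    · exact Or.inr (ih.tail ⟨c, LDEquiv.refl _⟩)

/-! ### Absorption -/

/-- The cofinal sequence `C 0 = x`, `C (n+1) = C n * C n`. -/
def C : ℕ → FreeMagma Unit
  | 0 => .of ()
  | n + 1 => C n * C n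

theorem ldequiv_mul {a a' b b' : FreeMagma X} (ha : LDEquiv a a') (hb : LDEquiv b b') :
    LDEquiv (a * b) (a' * b') :=
  (LDEquiv.mul_right b ha).trans (LDEquiv.mul_left a' hb)

theorem absorb_of (m : ℕ) : LDEquiv (FreeMagma.of () * C m) (C (m + 1)) := by
  induction m with
  | zero => exact LDEquiv.refl _
  | succ m ih =>
    exact (LDEquiv.ld _ _ _).trans (ldequiv_mul ih ih)

/-- Absorption: every term absorbs into the cofinal sequence. -/
theorem absorb (T : FreeMagma Unit) : ∃ m0, ∀ m, m0 ≤ m → LDEquiv (T * C m) (C (m + 1)) := by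
  induction T with
  | ih1 u => exact ⟨0, fun m _ => by cases u; exact absorb_of m⟩
  | ih2 a b iha ihb =>
    obtain ⟨m1, h1⟩ := iha
    obtain ⟨m2, h2⟩ := ihb
    refine ⟨max m1 m2 + 1, fun m hm => ?_⟩
    obtain ⟨k, rfl⟩ : ∃ k, m = k + 1 := ⟨m - 1, by omega⟩
    have hk1 : m1 ≤ k := by omega
    have hk2 : m2 ≤ k := by omega
    have s1 : LDEquiv ((a * b) * C (k + 1)) ((a * b) * (a * C k)) :=
      LDEquiv.mul_left _ (h1 k hk1).symm
    have s2 : LDEquiv ((a * b) * (a * C k)) (a * (b * C k)) := (LDEquiv.ld a b (C k)).symm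
    have s3 : LDEquiv (a * (b * C k)) (a * C (k + 1)) := LDEquiv.mul_left _ (h2 k hk2)
    have s4 : LDEquiv (a * C (k + 1)) (C (k + 2)) := h1 (k + 1) (by omega)
    exact s1.trans (s2.trans (s3.trans s4))

/-- Comparison property for the free monogenic LD-system. -/
theorem comparison {T T' : FreeMagma Unit} (h : ¬ LDEquiv T T') :
    DivT T T' ∨ DivT T' T := by
  obtain ⟨m1, h1⟩ := absorb T
  obtain ⟨m2, h2⟩ := absorb T'
  set m := max m1 m2 with hm
  have e : LDEquiv (T * C m) (T' * C m) :=
    (h1 m (le_max_left _ _)).trans (h2 m (le_max_right _ _)).symm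
  obtain ⟨w, hw1, hw2⟩ := ldequiv_join e
  obtain ⟨R, hR, hTR⟩ := spine_star hw1 (LeftSub.tail _ (LeftSub.refl T))
  obtain ⟨R', hR', hTR'⟩ := spine_star hw2 (LeftSub.tail _ (LeftSub.refl T'))
  have eTR : LDEquiv T R := exps_ldequiv hTR
  have eTR' : LDEquiv T' R' := exps_ldequiv hTR'
  rcases leftSub_linear hR hR' with hS | hS
  · rcases leftSub_divT hS with rfl | hd
    · exact absurd (eTR.trans eTR'.symm) h
    · exact Or.inl (divT_congr eTR.symm eTR'.symm hd)
  · rcases leftSub_divT hS with rfl | hd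
    · exact absurd (eTR.trans eTR'.symm) h
    · exact Or.inr (divT_congr eTR'.symm eTR.symm hd)


/-! ### Evaluation -/

theorem evalShelf_mul {S : Type*} [Shelf S] (g : S) (a b : FreeMagma Unit) :
    evalShelf g (a * b) = Shelf.act (evalShelf g a) (evalShelf g b) := rfl

theorem eval_ldequiv {S : Type*} [Shelf S] (g : S) {a b : FreeMagma Unit}
    (h : LDEquiv a b) : evalShelf g a = evalShelf g b := by
  induction h with
  | ld a b c =>
    simp only [evalShelf_mul]
    exact Shelf.self_distrib
  | refl a => rfl
  | symm _ ih => exact ih.symm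
  | trans _ _ ih1 ih2 => exact ih1.trans ih2
  | mul_left c _ ih => simp only [evalShelf_mul, ih]
  | mul_right c _ ih => simp only [evalShelf_mul, ih]

theorem divT_eval {S : Type*} [Shelf S] (g : S) {a b : FreeMagma Unit} (h : DivT a b) :
    Relation.TransGen (fun a b : S => ∃ x, Shelf.act a x = b)
      (evalShelf g a) (evalShelf g b) := by
  induction h with
  | single h =>
    obtain ⟨u, hu⟩ := h
    exact Relation.TransGen.single
      ⟨evalShelf g u, by rw [← evalShelf_mul]; exact eval_ldequiv g hu⟩
  | tail _ h ih =>
    obtain ⟨u, hu⟩ := h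
    exact ih.tail ⟨evalShelf g u, by rw [← evalShelf_mul]; exact eval_ldequiv g hu⟩

end LDAux

/-- freeness criterion: if `S` is a left shelf generated by an
element `g` and `S` is acyclic (the transitive closure of the division relation
is irreflexive), then two one-variable terms are LD-equivalent iff their
evaluations at `g` coincide; in other words, `S` is a free left shelf on `g`. -/
theorem acyclic_monogenerated_shelf_is_free {S : Type*} [Shelf S] (g : S)
    (hgen : ∀ a : S, ∃ T : FreeMagma Unit, evalShelf g T = a)
    (hacyc : Irreflexive (Relation.TransGen (fun a b : S => ∃ x, Shelf.act a x = b))) :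
    ∀ T T' : FreeMagma Unit, LDEquiv T T' ↔ evalShelf g T = evalShelf g T' := by
  intro T T'
  constructor
  · exact fun h => LDAux.eval_ldequiv g h
  · intro h
    by_contra hne
    rcases LDAux.comparison hne with hd | hd
    · have := LDAux.divT_eval g hd
      rw [h] at this
      exact hacyc _ this
    · have := LDAux.divT_eval g hd
      rw [h] at this
      exact hacyc _ this
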